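/- arXiv:2601.00717 — 3 statements merged into one kernel-verified Lean document; each statement's English description precedes it below -/
import Mathlib

section
/- For any self-adjoint bounded operators S, T on a Hilbert space K and any h ∈ K, with g(T) = T(1+T²)⁻¹, one has ‖g(T)h − g(S)h‖ ≤ ‖(T−S)(1+S²)⁻¹h‖ + ‖(S−T)S(1+S²)⁻¹h‖. -/
/-!
Writing `A = 1 + T²` and `B = 1 + S²`, the resolvent-type identity
`T A⁻¹ - S B⁻¹ = A⁻¹ (T B - A S) B⁻¹ = A⁻¹ ((T - S) B⁻¹) + (T A⁻¹) ((S - T) S B⁻¹)`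
holds in any ring, since `T` commutes with `A⁻¹`. For self-adjoint `T`,
`‖A x‖² = ‖x‖² + 2‖T x‖² + ‖T² x‖²` dominates both `‖x‖²` and `‖T x‖²`, so `A⁻¹` and `T A⁻¹`
are contractions, and the triangle inequality finishes the proof.
-/

open ContinuousLinearMap

section Ring

variable {R : Type*} [Ring R]

theorem commute_unit_inv_one_add_mul_self (t : R) (ht : IsUnit (1 + t * t)) :
    Commute t ↑ht.unit⁻¹ := by
  have : Commute t ↑ht.unit := by
    rw [ht.unit_spec]
    exact (Commute.one_right t).add_right ((Commute.refl t).mul_right (Commute.refl t))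
  exact this.units_inv_right

theorem mul_unit_inv_one_add_mul_self_sub (s t : R) (hs : IsUnit (1 + s * s))
    (ht : IsUnit (1 + t * t)) :
    t * ↑ht.unit⁻¹ - s * ↑hs.unit⁻¹ =
      ↑ht.unit⁻¹ * ((t - s) * ↑hs.unit⁻¹) + t * ↑ht.unit⁻¹ * ((s - t) * s * ↑hs.unit⁻¹) := by
  have hta : t * ↑ht.unit⁻¹ = ↑ht.unit⁻¹ * t := commute_unit_inv_one_add_mul_self t ht
  calc t * ↑ht.unit⁻¹ - s * ↑hs.unit⁻¹
      = ↑ht.unit⁻¹ * t * ((1 + s * s) * ↑hs.unit⁻¹)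
          - ↑ht.unit⁻¹ * (1 + t * t) * (s * ↑hs.unit⁻¹) := by
        rw [hs.mul_val_inv, ht.val_inv_mul, hta]; noncomm_ring
    _ = ↑ht.unit⁻¹ * ((t - s) * ↑hs.unit⁻¹)
          + ↑ht.unit⁻¹ * t * ((s - t) * s * ↑hs.unit⁻¹) := by
        noncomm_ring
    _ = _ := by rw [hta]

end Ring

section InnerProductSpace

variable {𝕜 E : Type*} [RCLike 𝕜] [NormedAddCommGroup E] [InnerProductSpace 𝕜 E] [CompleteSpace E]
  {T : E →L[𝕜] E}

theorem IsSelfAdjoint.norm_one_add_mul_self_apply_sq (hT : IsSelfAdjoint T) (x : E) :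
    ‖(1 + T * T) x‖ ^ 2 = ‖x‖ ^ 2 + 2 * ‖T x‖ ^ 2 + ‖T (T x)‖ ^ 2 := by
  have hsymm : inner 𝕜 x (T (T x)) = inner 𝕜 (T x) (T x) := (hT.isSymmetric x (T x)).symm
  rw [show (1 + T * T) x = x + T (T x) from rfl, @norm_add_sq 𝕜, hsymm, inner_self_eq_norm_sq]

theorem IsSelfAdjoint.norm_le_norm_one_add_mul_self_apply (hT : IsSelfAdjoint T) (x : E) :
    ‖x‖ ≤ ‖(1 + T * T) x‖ := by
  refine le_of_sq_le_sq ?_ (norm_nonneg _)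
  nlinarith [hT.norm_one_add_mul_self_apply_sq x]

theorem IsSelfAdjoint.norm_apply_le_norm_one_add_mul_self_apply (hT : IsSelfAdjoint T) (x : E) :
    ‖T x‖ ≤ ‖(1 + T * T) x‖ := by
  refine le_of_sq_le_sq ?_ (norm_nonneg _)
  nlinarith [hT.norm_one_add_mul_self_apply_sq x]

theorem IsSelfAdjoint.norm_unit_inv_one_add_mul_self_apply_le (hT : IsSelfAdjoint T)
    (hu : IsUnit (1 + T * T)) (y : E) : ‖(↑hu.unit⁻¹ : E →L[𝕜] E) y‖ ≤ ‖y‖ := by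
  have hy : (1 + T * T) ((↑hu.unit⁻¹ : E →L[𝕜] E) y) = y := DFunLike.congr_fun hu.mul_val_inv y
  simpa only [hy] using hT.norm_le_norm_one_add_mul_self_apply ((↑hu.unit⁻¹ : E →L[𝕜] E) y)

theorem IsSelfAdjoint.norm_mul_unit_inv_one_add_mul_self_apply_le (hT : IsSelfAdjoint T)
    (hu : IsUnit (1 + T * T)) (y : E) : ‖(T * ↑hu.unit⁻¹) y‖ ≤ ‖y‖ := by
  have hy : (1 + T * T) ((↑hu.unit⁻¹ : E →L[𝕜] E) y) = y := DFunLike.congr_fun hu.mul_val_inv y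
  have := hT.norm_apply_le_norm_one_add_mul_self_apply ((↑hu.unit⁻¹ : E →L[𝕜] E) y)
  rwa [hy] at this

end InnerProductSpace

theorem stmt_1_general {K : Type*} [NormedAddCommGroup K] [InnerProductSpace ℂ K] [CompleteSpace K]
    (S T : K →L[ℂ] K) (hT : IsSelfAdjoint T)
    (hSu : IsUnit (1 + S * S)) (hTu : IsUnit (1 + T * T)) (h : K) :
    ‖(T * ↑hTu.unit⁻¹) h - (S * ↑hSu.unit⁻¹) h‖ ≤
      ‖((T - S) * ↑hSu.unit⁻¹) h‖ + ‖((S - T) * S * ↑hSu.unit⁻¹) h‖ := by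
  rw [← sub_apply, mul_unit_inv_one_add_mul_self_sub S T hSu hTu, add_apply]
  exact (norm_add_le _ _).trans <| add_le_add
    (hT.norm_unit_inv_one_add_mul_self_apply_le hTu (((T - S) * ↑hSu.unit⁻¹) h))
    (hT.norm_mul_unit_inv_one_add_mul_self_apply_le hTu (((S - T) * S * ↑hSu.unit⁻¹) h))

/-- For self-adjoint bounded operators S, T on a Hilbert space K and h ∈ K, with
g(T) = T(1+T²)⁻¹, one has
‖g(T)h − g(S)h‖ ≤ ‖(T−S)(1+S²)⁻¹h‖ + ‖(S−T)S(1+S²)⁻¹h‖. -/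
theorem stmt_1 {K : Type*} [NormedAddCommGroup K] [InnerProductSpace ℂ K] [CompleteSpace K]
    (S T : K →L[ℂ] K) (hS : IsSelfAdjoint S) (hT : IsSelfAdjoint T)
    (hSu : IsUnit (1 + S * S)) (hTu : IsUnit (1 + T * T)) (h : K) :
    ‖(T * ↑hTu.unit⁻¹) h - (S * ↑hSu.unit⁻¹) h‖ ≤
      ‖((T - S) * ↑hSu.unit⁻¹) h‖ + ‖((S - T) * S * ↑hSu.unit⁻¹) h‖ :=
  stmt_1_general S T hT hSu hTu h
end

section
/- Let H be a Hilbert space and A ⊆ B(H) a *-subalgebra. Then the self-adjoint part A_sa of A is dense in the self-adjoint part of the SOT-closure of A, with respect to the strong operator topology. -/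
/-!
Take a net `aᵢ → T` in the strong operator topology with `aᵢ ∈ A`. Then `aᵢ → T` also weakly, and
since the adjoint is WOT-continuous, the real parts `ℜ aᵢ = (aᵢ + aᵢ*) / 2 ∈ A_sa` converge weakly
to `ℜ T = T`. So `T` lies in the WOT-closure of the convex set `A_sa`, which equals its
SOT-closure: an SOT-neighbourhood only sees finitely many vectors `x₁, …, xₙ`, and on the Hilbert
space `Hⁿ` the image `{(a x₁, …, a xₙ) | a ∈ A_sa}` is convex, so its weak and norm closures agree.
-/

/-- The SOT-closure of a set of operators: the preimage of the closure of its
image under the (injective) map to `H → H` with the topology of pointwise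
convergence. -/
def sotClosure {H : Type*} [NormedAddCommGroup H] [InnerProductSpace ℂ H]
    (s : Set (H →L[ℂ] H)) : Set (H →L[ℂ] H) :=
  (fun T : H →L[ℂ] H => (T : H → H)) ⁻¹'
    closure ((fun T : H →L[ℂ] H => (T : H → H)) '' s)

open Filter Topology ContinuousLinearMapWOT ComplexStarModule

section Operators

variable {H : Type*} [NormedAddCommGroup H] [InnerProductSpace ℂ H]

def evalPiLp {ι : Type*} (x : ι → H) : (H →L[ℂ] H) →ₗ[ℂ] PiLp 2 (fun _ : ι => H) where
  toFun A := WithLp.toLp 2 fun i => A (x i)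
  map_add' _ _ := rfl
  map_smul' _ _ := rfl

theorem mem_sotClosure_of_forall_mem_closure_evalPiLp {s : Set (H →L[ℂ] H)} {T : H →L[ℂ] H}
    (h : ∀ I : Finset H, evalPiLp (fun i : I => (i : H)) T ∈
      closure (evalPiLp (fun i : I => (i : H)) '' s)) :
    T ∈ sotClosure s := by
  show ⇑T ∈ closure _
  rw [mem_closure_iff_nhds]
  intro V hV
  rw [nhds_pi, Filter.mem_pi'] at hV
  obtain ⟨I, W, hW, hIW⟩ := hV
  have hU : {p : PiLp 2 (fun _ : I => H) | ∀ i : I, p i ∈ W i} ∈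
      𝓝 (evalPiLp (fun i : I => (i : H)) T) :=
    Filter.eventually_all.mpr fun i =>
      (PiLp.continuous_apply 2 _ i).continuousAt.preimage_mem_nhds (hW i)
  obtain ⟨_, hp, a, ha, rfl⟩ := mem_closure_iff_nhds.mp (h I) _ hU
  exact ⟨a, hIW fun i hi => hp ⟨i, hi⟩, a, ha, rfl⟩

theorem exists_tendsto_of_mem_sotClosure {s : Set (H →L[ℂ] H)} {T : H →L[ℂ] H}
    (hT : T ∈ sotClosure s) :
    ∃ l : Filter (H →L[ℂ] H), l.NeBot ∧ s ∈ l ∧ ∀ x, Tendsto (fun a => a x) l (𝓝 (T x)) := by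
  refine ⟨comap (⇑) (𝓝 ⇑T) ⊓ 𝓟 s, ?_, mem_inf_of_right (mem_principal_self s), fun x => ?_⟩
  · rw [inf_principal_neBot_iff]
    intro U hU
    obtain ⟨V, hV, hVU⟩ := mem_comap.mp hU
    obtain ⟨_, hV, a, ha, rfl⟩ := mem_closure_iff_nhds.mp hT V hV
    exact ⟨a, hVU hV, ha⟩
  · exact ((continuous_apply x).tendsto _).comp (tendsto_iff_comap.mpr inf_le_left)

variable [CompleteSpace H]

theorem continuous_toWeakSpace_evalPiLp {ι : Type*} [Fintype ι] (x : ι → H) :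
    Continuous fun A : H →WOT[ℂ] H =>
      toWeakSpace ℂ (PiLp 2 fun _ : ι => H) (evalPiLp x (toCLM A)) := by
  refine WeakBilin.continuous_of_continuous_eval _ fun φ => ?_
  have hφ : ∀ A : H →WOT[ℂ] H, φ (evalPiLp x (toCLM A)) =
      ∑ i, inner ℂ ((InnerProductSpace.toDual ℂ _).symm φ i) (A (x i)) := fun A => by
    rw [← InnerProductSpace.toDual_symm_apply, PiLp.inner_apply]; rfl
  change Continuous fun A : H →WOT[ℂ] H => φ (evalPiLp x (toCLM A))
  simp_rw [hφ]
  fun_prop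

theorem Convex.mem_sotClosure_of_mem_closure_ofCLM {s : Set (H →L[ℂ] H)} (hs : Convex ℝ s)
    {T : H →L[ℂ] H} (hT : ofCLM T ∈ closure (ofCLM '' s)) : T ∈ sotClosure s := by
  refine mem_sotClosure_of_forall_mem_closure_evalPiLp fun I => ?_
  set Φ := evalPiLp (fun i : I => (i : H))
  have hweak := map_mem_closure (continuous_toWeakSpace_evalPiLp (fun i : I => (i : H))) hT
    (t := toWeakSpace ℂ _ '' (Φ '' s)) (by rintro _ ⟨a, ha, rfl⟩; exact ⟨Φ a, ⟨a, ha, rfl⟩, rfl⟩)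
  have hΦs : Convex ℝ (Φ '' s) := hs.linear_image (Φ.restrictScalars ℝ)
  rw [← hΦs.toWeakSpace_closure ℂ] at hweak
  obtain ⟨q, hq, hqT⟩ := hweak
  rwa [← (toWeakSpace ℂ _).injective hqT]

theorem ofCLM_mem_closure_image_of_mem_sotClosure {s : Set (H →L[ℂ] H)} {T : H →L[ℂ] H}
    (hT : T ∈ sotClosure s) : ofCLM T ∈ closure (ofCLM '' s) := by
  obtain ⟨l, hl, hs, hpt⟩ := exists_tendsto_of_mem_sotClosure hT
  refine mem_closure_of_tendsto (tendsto_iff_forall_inner_apply_tendsto.mpr fun x y => ?_)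
    (Eventually.mono hs fun a ha => Set.mem_image_of_mem ofCLM ha)
  exact tendsto_const_nhds.inner (hpt x)

theorem continuous_ofCLM_realPart_toCLM :
    Continuous fun A : H →WOT[ℂ] H => ofCLM (ℜ (toCLM A) : H →L[ℂ] H) := by
  simp_rw [realPart_apply_coe]
  change Continuous fun A : H →WOT[ℂ] H => (2 : ℝ)⁻¹ • (A + star A)
  fun_prop

end Operators

section StarSubalgebra

variable {B : Type*} [Ring B] [StarRing B] [Algebra ℂ B] [StarModule ℂ B]

theorem StarSubalgebra.realPart_mem {S : StarSubalgebra ℂ B} {a : B} (ha : a ∈ S) :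
    (ℜ a : B) ∈ S := by
  rw [realPart_apply_coe, ← Complex.coe_smul]
  exact S.smul_mem (add_mem ha (star_mem ha)) _

theorem StarSubalgebra.convex_setOf_mem_and_isSelfAdjoint (S : StarSubalgebra ℂ B) :
    Convex ℝ {a : B | a ∈ S ∧ IsSelfAdjoint a} :=
  (S.toSubalgebra.toSubmodule.restrictScalars ℝ).convex.inter (selfAdjoint.submodule ℝ B).convex

end StarSubalgebra

/-- For a *-subalgebra A ⊆ B(H), the self-adjoint part of A is SOT-dense in the
self-adjoint part of the SOT-closure of A. -/
theorem stmt_13 {H : Type*} [NormedAddCommGroup H] [InnerProductSpace ℂ H]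
    [CompleteSpace H] (A : StarSubalgebra ℂ (H →L[ℂ] H)) :
    ∀ T : H →L[ℂ] H, T ∈ sotClosure (A : Set (H →L[ℂ] H)) → IsSelfAdjoint T →
      T ∈ sotClosure {a : H →L[ℂ] H | a ∈ A ∧ IsSelfAdjoint a} := by
  intro T hT hsa
  refine A.convex_setOf_mem_and_isSelfAdjoint.mem_sotClosure_of_mem_closure_ofCLM ?_
  have hℜT := map_mem_closure continuous_ofCLM_realPart_toCLM
    (ofCLM_mem_closure_image_of_mem_sotClosure hT) (t := ofCLM '' {a | a ∈ A ∧ IsSelfAdjoint a})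
    (by rintro _ ⟨a, ha, rfl⟩; exact ⟨_, ⟨StarSubalgebra.realPart_mem ha, (ℜ a).2⟩, rfl⟩)
  rwa [toCLM_ofCLM, hsa.coe_realPart] at hℜT
end

section
/- Let A be a topological algebra with hypocontinuous multiplication whose continuous multiplicative linear functionals separate points of the bidual A''. If u ∈ A'' is a weak-* cluster point of the canonical images of idempotents of A, then u □ u = u, where □ is the first Arens product. -/
/-!
On a multiplicative functional `f` the Arens product is multiplicative: `f_x = f(x) f`, hence
`ᵥf = v(f) f` and `(u □ v)(f) = u(f) v(f)`. If `u` is a weak-* limit of idempotents `aᵢ`, then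
`u(f) = lim f(aᵢ)` is a limit of idempotents of `ℂ`, hence idempotent, so `(u □ u)(f) = u(f)`
for every such `f`, and separation gives `u □ u = u`.
-/

open Filter Topology

theorem IsIdempotentElem.of_tendsto_map_mul {A M ι : Type*} [Mul A] [Mul M] [TopologicalSpace M]
    [ContinuousMul M] [T2Space M] {φ : A → M} (hφ : ∀ x y, φ (x * y) = φ x * φ y)
    {l : Filter ι} [l.NeBot] {a : ι → A} (ha : ∀ i, IsIdempotentElem (a i)) {c : M}
    (hc : Tendsto (fun i => φ (a i)) l (𝓝 c)) : IsIdempotentElem c := by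
  have hsq : Tendsto (fun i => φ (a i) * φ (a i)) l (𝓝 c) := by
    simpa only [← hφ, (ha _).eq] using hc
  exact tendsto_nhds_unique (hc.mul hc) hsq

section ArensProduct

variable {A : Type*} [Ring A] [Algebra ℂ A] [TopologicalSpace A]
  {fRight : (A →L[ℂ] ℂ) → A → (A →L[ℂ] ℂ)} (hfRight : ∀ f x b, fRight f x b = f (x * b))
  {vf : ((A →L[ℂ] ℂ) →L[ℂ] ℂ) → (A →L[ℂ] ℂ) → (A →L[ℂ] ℂ)}
  (hvf : ∀ v f x, vf v f x = v (fRight f x))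
  {arens : ((A →L[ℂ] ℂ) →L[ℂ] ℂ) → ((A →L[ℂ] ℂ) →L[ℂ] ℂ) → ((A →L[ℂ] ℂ) →L[ℂ] ℂ)}
  (harens : ∀ u v f, arens u v f = u (vf v f))
  {f : A →L[ℂ] ℂ} (hf : ∀ x y, f (x * y) = f x * f y)

include hfRight hf in
theorem fRight_eq_smul_of_map_mul (x : A) : fRight f x = f x • f := by
  ext b
  simp [hfRight, hf]

include hfRight hvf hf in
theorem vf_eq_smul_of_map_mul (v : (A →L[ℂ] ℂ) →L[ℂ] ℂ) : vf v f = v f • f := by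
  ext x
  simp [hvf, fRight_eq_smul_of_map_mul hfRight hf, mul_comm]

include hfRight hvf harens hf in
theorem arens_apply_of_map_mul (u v : (A →L[ℂ] ℂ) →L[ℂ] ℂ) : arens u v f = u f * v f := by
  simp [harens, vf_eq_smul_of_map_mul hfRight hvf hf, mul_comm]

end ArensProduct

theorem stmt_16_general {A : Type*} [Ring A] [Algebra ℂ A] [TopologicalSpace A]
    -- f_x ∈ A' : f_x(b) = f(xb)
    (fRight : (A →L[ℂ] ℂ) → A → (A →L[ℂ] ℂ))
    (hfRight : ∀ f x b, fRight f x b = f (x * b))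
    -- ᵥf ∈ A' : ᵥf(x) = v(f_x)
    (vf : (((A →L[ℂ] ℂ) →L[ℂ] ℂ)) → (A →L[ℂ] ℂ) → (A →L[ℂ] ℂ))
    (hvf : ∀ v f x, vf v f x = v (fRight f x))
    -- the first Arens product: (u □ v)(f) = u(ᵥf)
    (arens : ((A →L[ℂ] ℂ) →L[ℂ] ℂ) → ((A →L[ℂ] ℂ) →L[ℂ] ℂ) → ((A →L[ℂ] ℂ) →L[ℂ] ℂ))
    (harens : ∀ u v f, arens u v f = u (vf v f))
    -- the multiplicative functionals separate points of A''
    (hsep : ∀ u v : (A →L[ℂ] ℂ) →L[ℂ] ℂ, u ≠ v →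
      ∃ f : A →L[ℂ] ℂ, (∀ x y : A, f (x * y) = f x * f y) ∧ u f ≠ v f)
    -- u is a weak-* limit of canonical images of idempotents of A
    (u : (A →L[ℂ] ℂ) →L[ℂ] ℂ)
    {ι : Type*} (l : Filter ι) [l.NeBot] (a : ι → A)
    (hidem : ∀ i, a i * a i = a i)
    (hconv : ∀ f : A →L[ℂ] ℂ, Filter.Tendsto (fun i => f (a i)) l (nhds (u f))) :
    arens u u = u := by
  by_contra hne
  obtain ⟨f, hf, hfne⟩ := hsep (arens u u) u hne
  have hidem_uf : IsIdempotentElem (u f) :=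
    IsIdempotentElem.of_tendsto_map_mul hf hidem (hconv f)
  exact hfne ((arens_apply_of_map_mul hfRight hvf harens hf u u).trans hidem_uf.eq)

/-- Let A be a topological algebra whose continuous multiplicative linear
functionals separate points of the bidual A''. If u ∈ A'' is a weak-* limit of
canonical images of idempotents of A, then u □ u = u for the first Arens product
□, given here by its defining equations. -/
theorem stmt_16 {A : Type*} [Ring A] [Algebra ℂ A] [TopologicalSpace A]
    [IsTopologicalRing A]
    -- f_x ∈ A' : f_x(b) = f(xb)
    (fRight : (A →L[ℂ] ℂ) → A → (A →L[ℂ] ℂ))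
    (hfRight : ∀ f x b, fRight f x b = f (x * b))
    -- ᵥf ∈ A' : ᵥf(x) = v(f_x)
    (vf : (((A →L[ℂ] ℂ) →L[ℂ] ℂ)) → (A →L[ℂ] ℂ) → (A →L[ℂ] ℂ))
    (hvf : ∀ v f x, vf v f x = v (fRight f x))
    -- the first Arens product: (u □ v)(f) = u(ᵥf)
    (arens : ((A →L[ℂ] ℂ) →L[ℂ] ℂ) → ((A →L[ℂ] ℂ) →L[ℂ] ℂ) → ((A →L[ℂ] ℂ) →L[ℂ] ℂ))
    (harens : ∀ u v f, arens u v f = u (vf v f))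
    -- the multiplicative functionals separate points of A''
    (hsep : ∀ u v : (A →L[ℂ] ℂ) →L[ℂ] ℂ, u ≠ v →
      ∃ f : A →L[ℂ] ℂ, (∀ x y : A, f (x * y) = f x * f y) ∧ u f ≠ v f)
    -- u is a weak-* limit of canonical images of idempotents of A
    (u : (A →L[ℂ] ℂ) →L[ℂ] ℂ)
    {ι : Type*} (l : Filter ι) [l.NeBot] (a : ι → A)
    (hidem : ∀ i, a i * a i = a i)
    (hconv : ∀ f : A →L[ℂ] ℂ, Filter.Tendsto (fun i => f (a i)) l (nhds (u f))) :
    arens u u = u :=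
  stmt_16_general fRight hfRight vf hvf arens harens hsep u l a hidem hconv
end
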